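/- Suppose P ∈ [1/2,1]. If μ = Σ_{j=1}^{N} f_j · δ_{v_j} is a weak stationary solution of the δ model with 0 ≤ v_1 < v_2 < … < v_N ≤ V_max, f_j > 0 for every j, and Σ_{j=1}^{N} f_j = ρ, then N = 1, v_1 = V_max and μ = ρ·δ_{V_max}; that is, for P ≥ 1/2 the only equilibrium that is a finite positive combination of Dirac masses concentrates all vehicles at the maximum speed. -/
import Mathlib


open MeasureTheory

/-- The δ-model transition kernel: for pre-interaction speeds `vs` (candidate) and
`vf` (field), the probability measure
`A_δ(vs,vf) = (1−P)·δ_{min(vs,vf)} + P·δ_{min(vs+Δv, Vmax)}`. -/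
noncomputable def deltaKernel (Vmax Δv P : ℝ) (vs vf : ℝ) : Measure ℝ :=
  ENNReal.ofReal (1 - P) • Measure.dirac (min vs vf)
    + ENNReal.ofReal P • Measure.dirac (min (vs + Δv) Vmax)

/-- `μ` is a weak stationary solution of the δ model: for every continuous test
function `φ`, `∫∫ (∫ φ dA_δ(v_*,v^*)) dμ(v_*) dμ(v^*) = ρ ∫ φ dμ`. -/
def IsWeakStationaryDelta (Vmax Δv ρ P : ℝ) (μ : Measure ℝ) : Prop :=
  ∀ φ : ℝ → ℝ, Continuous φ →
    (∫ vf, ∫ vs, (∫ v, φ v ∂(deltaKernel Vmax Δv P vs vf)) ∂μ ∂μ) = ρ * ∫ v, φ v ∂μ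

lemma integrableDirac {g : ℝ → ℝ} (hg : Measurable g) (a : ℝ) :
    Integrable g (Measure.dirac a) := by
  refine ⟨hg.aestronglyMeasurable, ?_⟩
  simp [HasFiniteIntegral, lintegral_dirac]

lemma integral_sum_smul_dirac {N : ℕ} (f v : Fin N → ℝ) (hf : ∀ j, 0 ≤ f j)
    {g : ℝ → ℝ} (hg : Measurable g) :
    ∫ x, g x ∂(∑ j, ENNReal.ofReal (f j) • Measure.dirac (v j))
      = ∑ j, f j * g (v j) := by
  rw [integral_finset_sum_measure (fun i _ =>
    (integrableDirac hg (v i)).smul_measure ENNReal.ofReal_ne_top)]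
  simp [integral_smul_measure, integral_dirac, smul_eq_mul,
    ENNReal.toReal_ofReal (hf _)]

lemma integral_deltaKernel (Vmax Δv P vs vf : ℝ) (hP0 : 0 ≤ P) (hP1 : P ≤ 1)
    {φ : ℝ → ℝ} (hφ : Measurable φ) :
    ∫ x, φ x ∂(deltaKernel Vmax Δv P vs vf)
      = (1 - P) * φ (min vs vf) + P * φ (min (vs + Δv) Vmax) := by
  rw [deltaKernel, integral_add_measure
    ((integrableDirac hφ _).smul_measure ENNReal.ofReal_ne_top)
    ((integrableDirac hφ _).smul_measure ENNReal.ofReal_ne_top)]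
  simp [integral_smul_measure, integral_dirac, smul_eq_mul,
    ENNReal.toReal_ofReal hP0, ENNReal.toReal_ofReal (by linarith : (0:ℝ) ≤ 1 - P)]

/-- The discrete form of stationarity. -/
lemma discrete_stationary (Vmax Δv ρ P : ℝ) (hP0 : 0 ≤ P) (hP1 : P ≤ 1)
    {N : ℕ} (f v : Fin N → ℝ) (hf : ∀ j, 0 ≤ f j)
    (hstat : IsWeakStationaryDelta Vmax Δv ρ P
      (∑ j, ENNReal.ofReal (f j) • Measure.dirac (v j)))
    {φ : ℝ → ℝ} (hφ : Continuous φ) :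
    ∑ j, f j * (∑ i, f i * ((1 - P) * φ (min (v i) (v j))
        + P * φ (min (v i + Δv) Vmax)))
      = ρ * ∑ j, f j * φ (v j) := by
  have key := hstat φ hφ
  rw [integral_sum_smul_dirac f v hf hφ.measurable] at key
  rw [← key]
  have hinner : ∀ vf : ℝ,
      (∫ vs, (∫ x, φ x ∂(deltaKernel Vmax Δv P vs vf))
          ∂(∑ j, ENNReal.ofReal (f j) • Measure.dirac (v j)))
        = ∑ i, f i * ((1 - P) * φ (min (v i) vf) + P * φ (min (v i + Δv) Vmax)) := by
    intro vf
    have hmeas : Measurable fun vs : ℝ =>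
        (1 - P) * φ (min vs vf) + P * φ (min (vs + Δv) Vmax) := by
      fun_prop
    rw [show (fun vs : ℝ => ∫ x, φ x ∂(deltaKernel Vmax Δv P vs vf))
        = fun vs : ℝ => (1 - P) * φ (min vs vf) + P * φ (min (vs + Δv) Vmax) from
      funext fun vs => integral_deltaKernel Vmax Δv P vs vf hP0 hP1 hφ.measurable]
    exact integral_sum_smul_dirac f v hf hmeas
  rw [show (fun vf : ℝ => ∫ vs, (∫ x, φ x ∂(deltaKernel Vmax Δv P vs vf))
        ∂(∑ j, ENNReal.ofReal (f j) • Measure.dirac (v j)))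
      = fun vf : ℝ => ∑ i, f i * ((1 - P) * φ (min (v i) vf)
        + P * φ (min (v i + Δv) Vmax)) from funext hinner]
  have hmeas2 : Measurable fun vf : ℝ => ∑ i, f i * ((1 - P) * φ (min (v i) vf)
      + P * φ (min (v i + Δv) Vmax)) :=
    Finset.measurable_sum _ (fun i _ => by fun_prop)
  exact (integral_sum_smul_dirac f v hf hmeas2).symm

/-- Suppose `P ∈ [1/2,1]`.  If `μ = Σ_j f_j δ_{v_j}` is a weak stationary
solution of the δ model with `0 ≤ v_1 < ⋯ < v_N ≤ Vmax`, `f_j > 0` and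
`Σ_j f_j = ρ`, then `N = 1`, `v_1 = Vmax` and `μ = ρ·δ_{Vmax}`: for `P ≥ 1/2`
the only equilibrium that is a finite positive combination of Dirac masses
concentrates all vehicles at the maximum speed. -/
theorem statement5 (Vmax Δv ρ P : ℝ)
    (hV : 0 < Vmax) (hΔ : 0 < Δv) (hρ : 0 < ρ) (hP0 : 1 / 2 ≤ P) (hP1 : P ≤ 1)
    (N : ℕ) (hN : 0 < N) (v f : Fin N → ℝ)
    (hv0 : 0 ≤ v ⟨0, hN⟩) (hmono : StrictMono v) (hvle : ∀ j, v j ≤ Vmax)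
    (hf : ∀ j, 0 < f j) (hmass : ∑ j, f j = ρ)
    (hstat : IsWeakStationaryDelta Vmax Δv ρ P
      (∑ j, ENNReal.ofReal (f j) • Measure.dirac (v j))) :
    N = 1 ∧ (∀ j : Fin N, v j = Vmax) ∧
      (∑ j, ENNReal.ofReal (f j) • Measure.dirac (v j))
        = ENNReal.ofReal ρ • Measure.dirac Vmax := by
  have hdisc := fun (φ : ℝ → ℝ) (hφ : Continuous φ) =>
    discrete_stationary Vmax Δv ρ P (by linarith) hP1 f v (fun j => (hf j).le) hstat hφ
  have hv1 : v ⟨0, hN⟩ = Vmax := by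
    by_contra hne
    set z : Fin N := ⟨0, hN⟩
    have hlt : v z < Vmax := lt_of_le_of_ne (hvle z) hne
    set v0 := v z with hv0def
    set ε := min Δv (Vmax - v0) with hεdef
    have hε0 : 0 < ε := lt_min hΔ (by linarith)
    set φ : ℝ → ℝ := fun x => max 0 (1 - (x - v0) / ε) with hφdef
    have hφc : Continuous φ := by
      apply Continuous.max continuous_const
      fun_prop
    have hφnn : ∀ x, 0 ≤ φ x := fun x => le_max_left _ _
    have hφ1 : φ v0 = 1 := by simp [hφdef]
    have hφzero : ∀ x, v0 + ε ≤ x → φ x = 0 := by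
      intro x hx
      have : (x - v0) / ε ≥ 1 := (le_div_iff₀ hε0).2 (by linarith)
      simp only [hφdef]
      exact max_eq_left (by linarith)
    have hzle : ∀ i : Fin N, v0 ≤ v i := by
      intro i
      exact hmono.monotone (show z ≤ i from Fin.mk_le_of_le_val (Nat.zero_le _))
    have hacc : ∀ i : Fin N, φ (min (v i + Δv) Vmax) = 0 := by
      intro i
      apply hφzero
      have h1 : ε ≤ Δv := min_le_left _ _
      have h2 : ε ≤ Vmax - v0 := min_le_right _ _
      have := hzle i
      exact le_min (by linarith) (by linarith)
    have key := hdisc φ hφc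
    simp only [hacc, mul_zero, add_zero] at key
    -- key : ∑ j, f j * ∑ i, f i * ((1-P) * φ (min (v i) (v j))) = ρ * ∑ j, f j * φ (v j)
    set S := ∑ j, f j * φ (v j) with hSdef
    set T := ∑ j, ∑ i, f j * (f i * φ (min (v i) (v j))) with hTdef
    have key' : (1 - P) * T = ρ * S := by
      rw [← key, hTdef, Finset.mul_sum]
      apply Finset.sum_congr rfl
      intro j _
      rw [Finset.mul_sum, Finset.mul_sum]
      apply Finset.sum_congr rfl
      intro i _
      ring
    have hT0 : 0 ≤ T := by
      apply Finset.sum_nonneg; intro j _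
      apply Finset.sum_nonneg; intro i _
      have := (hf j).le; have := (hf i).le; have := hφnn (min (v i) (v j))
      positivity
    have hTlt : T < ∑ j, ∑ i, f j * (f i * (φ (v i) + φ (v j))) := by
      apply Finset.sum_lt_sum
      · intro j _
        apply Finset.sum_le_sum
        intro i _
        have hle : φ (min (v i) (v j)) ≤ φ (v i) + φ (v j) := by
          rcases min_choice (v i) (v j) with h | h <;> rw [h]
          · nlinarith [hφnn (v j)]
          · nlinarith [hφnn (v i)]
        exact mul_le_mul_of_nonneg_left
          (mul_le_mul_of_nonneg_left hle (hf i).le) (hf j).le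
      · refine ⟨z, Finset.mem_univ z, ?_⟩
        apply Finset.sum_lt_sum
        · intro i _
          have hle : φ (min (v i) (v z)) ≤ φ (v i) + φ (v z) := by
            rcases min_choice (v i) (v z) with h | h <;> rw [h]
            · nlinarith [hφnn (v z)]
            · nlinarith [hφnn (v i)]
          exact mul_le_mul_of_nonneg_left
            (mul_le_mul_of_nonneg_left hle (hf i).le) (hf z).le
        · refine ⟨z, Finset.mem_univ z, ?_⟩
          rw [min_self]
          have : φ (v z) = 1 := hφ1
          rw [this]
          nlinarith [hf z]
    have hsum : ∑ j, ∑ i, f j * (f i * (φ (v i) + φ (v j))) = 2 * ρ * S := by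
      have h1 : ∑ j, ∑ i, f j * (f i * (φ (v i) + φ (v j)))
          = ∑ j, (f j * S + f j * φ (v j) * ρ) := by
        apply Finset.sum_congr rfl
        intro j _
        rw [hSdef, ← hmass, Finset.mul_sum, Finset.mul_sum, ← Finset.sum_add_distrib]
        apply Finset.sum_congr rfl; intro i _; ring
      rw [h1, Finset.sum_add_distrib, ← Finset.sum_mul, ← Finset.sum_mul, hmass, ← hSdef]
      ring
    rw [hsum] at hTlt
    have h12 : (1 - P) * T ≤ (1/2) * T := by
      apply mul_le_mul_of_nonneg_right (by linarith) hT0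
    linarith
  have hall : ∀ j : Fin N, v j = Vmax := by
    intro j
    have h1 : v ⟨0, hN⟩ ≤ v j :=
      hmono.monotone (Fin.mk_le_of_le_val (Nat.zero_le _))
    have h2 := hvle j
    rw [hv1] at h1
    linarith
  have hN1 : N = 1 := by
    by_contra h
    have h2 : 2 ≤ N := by omega
    have hlt : v ⟨0, hN⟩ < v ⟨1, by omega⟩ := hmono (by simp [Fin.lt_def])
    rw [hv1, hall ⟨1, by omega⟩] at hlt
    exact lt_irrefl _ hlt
  refine ⟨hN1, hall, ?_⟩
  have : ∑ j, ENNReal.ofReal (f j) • Measure.dirac (v j)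
      = ∑ j, ENNReal.ofReal (f j) • Measure.dirac Vmax :=
    Finset.sum_congr rfl (fun j _ => by rw [hall j])
  rw [this, ← Finset.sum_smul, ← hmass,
    ENNReal.ofReal_sum_of_nonneg (fun j _ => (hf j).le)]
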